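/- arXiv:2208.04422 — 4 statements merged into one kernel-verified Lean document; each statement's English description precedes it below -/
import Mathlib

section
/- The family of six subsets of Bool × Bool given by the truth sets of p, q, p ∨ q, p → q, q → p, and ⊤ is closed under the operation (X, Y) ↦ truth set of implication, i.e., {(a,b) | (a,b) ∈ X → (a,b) ∈ Y} (classically: Xᶜ ∪ Y). That is, if X and Y belong to this family, so does Xᶜ ∪ Y. -/
open Set in
theorem family_closed_under_imp :
    ∀ X Y : Set (Bool × Bool),
      X ∈ ({{ab | ab.1 = true}, {ab | ab.2 = true},
            {ab | ab.1 = true} ∪ {ab | ab.2 = true},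
            {ab | ab.1 = true}ᶜ ∪ {ab | ab.2 = true},
            {ab | ab.2 = true}ᶜ ∪ {ab | ab.1 = true},
            (univ : Set (Bool × Bool))} : Set (Set (Bool × Bool))) →
      Y ∈ ({{ab | ab.1 = true}, {ab | ab.2 = true},
            {ab | ab.1 = true} ∪ {ab | ab.2 = true},
            {ab | ab.1 = true}ᶜ ∪ {ab | ab.2 = true},
            {ab | ab.2 = true}ᶜ ∪ {ab | ab.1 = true},
            (univ : Set (Bool × Bool))} : Set (Set (Bool × Bool))) →
      (Xᶜ ∪ Y) ∈ ({{ab | ab.1 = true}, {ab | ab.2 = true},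
            {ab | ab.1 = true} ∪ {ab | ab.2 = true},
            {ab | ab.1 = true}ᶜ ∪ {ab | ab.2 = true},
            {ab | ab.2 = true}ᶜ ∪ {ab | ab.1 = true},
            (univ : Set (Bool × Bool))} : Set (Set (Bool × Bool))) := by
  intro X Y hX hY
  simp only [Set.mem_insert_iff, Set.mem_singleton_iff] at *
  rcases hX with h|h|h|h|h|h <;> rcases hY with g|g|g|g|g|g <;> subst h <;> subst g <;>
    first
    | (refine Or.inl ?_; ext ⟨a,b⟩; cases a <;> cases b <;> simp; done)
    | (refine Or.inr (Or.inl ?_); ext ⟨a,b⟩; cases a <;> cases b <;> simp; done)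
    | (refine Or.inr (Or.inr (Or.inl ?_)); ext ⟨a,b⟩; cases a <;> cases b <;> simp; done)
    | (refine Or.inr (Or.inr (Or.inr (Or.inl ?_))); ext ⟨a,b⟩; cases a <;> cases b <;> simp; done)
    | (refine Or.inr (Or.inr (Or.inr (Or.inr (Or.inl ?_)))); ext ⟨a,b⟩; cases a <;> cases b <;> simp; done)
    | (refine Or.inr (Or.inr (Or.inr (Or.inr (Or.inr ?_)))); ext ⟨a,b⟩; cases a <;> cases b <;> simp; done)
end

section
/- Every formula built from variables p and q using only implication has a truth set (subset of Bool × Bool of satisfying valuations) belonging to the six-element family {⟦p⟧, ⟦q⟧, ⟦p∨q⟧, ⟦p→q⟧, ⟦q→p⟧, univ}; moreover the truth set {(true,true)} of p ∧ q is not in this family. -/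
inductive IForm : Type
  | var₁ : IForm
  | var₂ : IForm
  | imp  : IForm → IForm → IForm

def IForm.eval : IForm → Bool → Bool → Bool
  | .var₁, a, _ => a
  | .var₂, _, b => b
  | .imp φ ψ, a, b => (!(φ.eval a b)) || (ψ.eval a b)

def IForm.truthSet (φ : IForm) : Set (Bool × Bool) :=
  {ab | φ.eval ab.1 ab.2 = true}

def theFamily : Set (Set (Bool × Bool)) :=
  { {ab | ab.1 = true}, {ab | ab.2 = true},
    {ab | (ab.1 || ab.2) = true}, {ab | (!ab.1 || ab.2) = true},
    {ab | (!ab.2 || ab.1) = true}, Set.univ }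

def sixList : List (Bool → Bool → Bool) :=
  [fun a _ => a, fun _ b => b, fun a b => a || b, fun a b => !a || b,
   fun a b => !b || a, fun _ _ => true]

lemma key (φ : IForm) : ∃ f ∈ sixList, ∀ a b, φ.eval a b = f a b := by
  induction φ with
  | var₁ => exact ⟨fun a _ => a, by simp [sixList], fun a b => rfl⟩
  | var₂ => exact ⟨fun _ b => b, by simp [sixList], fun a b => rfl⟩
  | imp φ ψ ih₁ ih₂ =>
    obtain ⟨f, hf, hef⟩ := ih₁
    obtain ⟨g, hg, heg⟩ := ih₂
    refine ⟨fun a b => !f a b || g a b, ?_, fun a b => by simp [IForm.eval, hef, heg]⟩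
    fin_cases hf <;> fin_cases hg <;> simp [sixList] <;> decide

theorem imp_truth_sets :
    (∀ φ : IForm, φ.truthSet ∈ theFamily) ∧
    ({((true : Bool), (true : Bool))} : Set (Bool × Bool)) ∉ theFamily := by
  constructor
  · intro φ
    obtain ⟨f, hf, hef⟩ := key φ
    have hs : φ.truthSet = {ab | f ab.1 ab.2 = true} := by
      ext ⟨a, b⟩; simp [IForm.truthSet, hef]
    rw [hs]
    fin_cases hf <;> simp [theFamily]
  · intro h
    simp only [theFamily, Set.mem_insert_iff, Set.mem_singleton_iff, Set.ext_iff,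
      Set.mem_setOf_eq, Set.mem_univ, iff_true] at h
    rcases h with h|h|h|h|h|h <;>
      first
        | simpa using h ((true : Bool), (false : Bool))
        | simpa using h ((false : Bool), (true : Bool))
end

section
/- In linear temporal logic over ℕ with the valuation π(p) = {n | n ≡ 1 mod 2} and π(q) = {n | n ≡ 0 mod 4}, neither the formula p U q (until) nor p W q (weak until) is semantically equivalent, under this valuation, to any formula built from p, q using ¬, ∨, and the future modality F. Specifically, the truth set of p U q (and of p W q) under this valuation does not lie in the family {⟦¬(p∨q)⟧, ⟦p⟧, ⟦p∨q⟧, ℕ, ⟦¬q⟧, ⟦¬p⟧, ⟦q⟧, ∅}, while every F-only formula (no X, U, W) has its truth set in this family. -/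
/-!
Under this valuation a time point is of one of three kinds: odd (`p`), divisible by 4 (`q`), or
`2 mod 4` (neither). Every kind recurs arbitrarily late (`n` and `n + 4k` are of the same kind), so
the truth value of `F φ` does not depend on the time point, and by induction the truth set of every
`F`-formula is a union of kinds. The eight unions of kinds are exactly the members of `theFamily`.
But `1` and `3` are of the same kind while `3 ⊨ p U q` (witness `4`) and `1 ⊭ p W q` (`2` breaks `p`
before any `q`), so neither until-set is such a union.
-/

namespace Stmt4

inductive Form : Type
  | p : Form
  | q : Form
  | neg : Form → Form
  | or  : Form → Form → Form
  | F   : Form → Form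

def valP (n : ℕ) : Prop := n % 2 = 1
def valQ (n : ℕ) : Prop := n % 4 = 0

def Sat : Form → ℕ → Prop
  | .p, n => valP n
  | .q, n => valQ n
  | .neg φ, n => ¬ Sat φ n
  | .or φ ψ, n => Sat φ n ∨ Sat ψ n
  | .F φ, n => ∃ m, n ≤ m ∧ Sat φ m

def truthSet (φ : Form) : Set ℕ := {n | Sat φ n}

def untilSet : Set ℕ :=
  {n | ∃ m, n ≤ m ∧ valQ m ∧ ∀ i, n ≤ i → i < m → valP i}

def weakUntilSet : Set ℕ :=
  {n | ∀ m, n ≤ m → ¬ valP m →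
      ∃ m', n ≤ m' ∧ valQ m' ∧ ∀ i, n ≤ i → i < m' → valP i}

def theFamily : Set (Set ℕ) :=
  { {n | ¬ (valP n ∨ valQ n)}, {n | valP n}, {n | valP n ∨ valQ n}, Set.univ,
    {n | ¬ valQ n}, {n | ¬ valP n}, {n | valQ n}, ∅ }

def SameAtoms (n m : ℕ) : Prop := (valP n ↔ valP m) ∧ (valQ n ↔ valQ m)

def AtomInvariant (S : Set ℕ) : Prop := ∀ ⦃n m : ℕ⦄, SameAtoms n m → (n ∈ S ↔ m ∈ S)

lemma sameAtoms_add_four_mul (m k : ℕ) : SameAtoms m (m + 4 * k) := by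
  unfold SameAtoms valP valQ; omega

lemma sameAtoms_zero_or_one_or_two (n : ℕ) : SameAtoms n 0 ∨ SameAtoms n 1 ∨ SameAtoms n 2 := by
  unfold SameAtoms valP valQ; omega

lemma sameAtoms_one_three : SameAtoms 1 3 := by
  unfold SameAtoms valP valQ; omega

theorem sat_congr (φ : Form) {n m : ℕ} (h : SameAtoms n m) : Sat φ n ↔ Sat φ m := by
  induction φ generalizing n m with
  | p => exact h.1
  | q => exact h.2
  | neg φ ih => exact (ih h).not
  | or φ ψ ihφ ihψ => exact (ihφ h).or (ihψ h)
  | F φ ih =>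
    have sat_F_iff : ∀ n, Sat (.F φ) n ↔ ∃ k, Sat φ k := fun n =>
      ⟨fun ⟨k, _, hk⟩ => ⟨k, hk⟩,
        fun ⟨k, hk⟩ => ⟨k + 4 * n, by omega, (ih (sameAtoms_add_four_mul k n)).1 hk⟩⟩
    rw [sat_F_iff, sat_F_iff]

theorem atomInvariant_truthSet (φ : Form) : AtomInvariant (truthSet φ) :=
  fun _ _ h => sat_congr φ h

theorem AtomInvariant.ext {S T : Set ℕ} (hS : AtomInvariant S) (hT : AtomInvariant T)
    (h0 : 0 ∈ S ↔ 0 ∈ T) (h1 : 1 ∈ S ↔ 1 ∈ T) (h2 : 2 ∈ S ↔ 2 ∈ T) : S = T := by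
  ext n
  rcases sameAtoms_zero_or_one_or_two n with h | h | h
  · rw [hS h, hT h, h0]
  · rw [hS h, hT h, h1]
  · rw [hS h, hT h, h2]

lemma exists_mem_theFamily_of_mem_iff (a b c : Prop) :
    ∃ T ∈ theFamily, (0 ∈ T ↔ a) ∧ (1 ∈ T ↔ b) ∧ (2 ∈ T ↔ c) := by
  by_cases a <;> by_cases b <;> by_cases c <;>
    simp [theFamily, valP, valQ, *]

theorem mem_theFamily_iff {S : Set ℕ} : S ∈ theFamily ↔ AtomInvariant S := by
  have atomInvariant_of_mem : ∀ T ∈ theFamily, AtomInvariant T := by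
    intro T hT n m h
    simp only [theFamily, Set.mem_insert_iff, Set.mem_singleton_iff] at hT
    rcases hT with rfl | rfl | rfl | rfl | rfl | rfl | rfl | rfl <;> simp [h.1, h.2]
  refine ⟨atomInvariant_of_mem S, fun hS => ?_⟩
  obtain ⟨T, hT, h0, h1, h2⟩ := exists_mem_theFamily_of_mem_iff (0 ∈ S) (1 ∈ S) (2 ∈ S)
  rwa [hS.ext (atomInvariant_of_mem T hT) h0.symm h1.symm h2.symm]

lemma three_mem_untilSet : 3 ∈ untilSet :=
  ⟨4, by omega, rfl, fun i h3 h4 => by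
    obtain rfl : i = 3 := by omega
    rfl⟩

lemma one_notMem_untilSet : 1 ∉ untilSet := by
  rintro ⟨m, h1m, hm, hp⟩
  have h2m : 2 < m := by unfold valQ at hm; omega
  exact absurd (hp 2 (by omega) h2m) (by simp [valP])

lemma untilSet_subset_weakUntilSet : untilSet ⊆ weakUntilSet :=
  fun _ hn _ _ _ => hn

lemma one_notMem_weakUntilSet : 1 ∉ weakUntilSet :=
  fun h => one_notMem_untilSet (h 2 (by omega) (by simp [valP]))

theorem not_atomInvariant_of_three_mem_of_one_notMem {S : Set ℕ} (h3 : 3 ∈ S) (h1 : 1 ∉ S) :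
    ¬ AtomInvariant S :=
  fun hS => h1 ((hS sameAtoms_one_three).2 h3)

theorem until_undefinable_from_F :
    (∀ φ : Form, truthSet φ ∈ theFamily) ∧
    untilSet ∉ theFamily ∧ weakUntilSet ∉ theFamily := by
  simp only [mem_theFamily_iff]
  exact ⟨atomInvariant_truthSet,
    not_atomInvariant_of_three_mem_of_one_notMem three_mem_untilSet one_notMem_untilSet,
    not_atomInvariant_of_three_mem_of_one_notMem (untilSet_subset_weakUntilSet three_mem_untilSet)
      one_notMem_weakUntilSet⟩

end Stmt4
end

section
/- In intuitionistic propositional logic, negation is not definable from ∧, ∨, →: there exists a Kripke model (the 3-element tree with root r and two incomparable children a, b, with π(p) = {a}) in which every formula in the single variable p built using only ∧, ∨, → has truth set equal to either {a} or the whole model, while the truth set of ¬p is {b}, which is neither. Hence ¬p is not semantically equivalent to any negation-free formula. -/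
namespace Stmt9

/-- Worlds: r = 0, a = 1, b = 2. -/
abbrev W := Fin 3

/-- Order: reflexive, plus r ⪯ a and r ⪯ b. -/
def le (x y : W) : Prop := x = y ∨ x = 0

def valP : Set W := {1}

/-- Negation-free formulas in the single variable p. -/
inductive Form : Type
  | atom : Form
  | and : Form → Form → Form
  | or  : Form → Form → Form
  | imp : Form → Form → Form

def force : Form → W → Prop
  | .atom, w => w ∈ valP
  | .and φ ψ, w => force φ w ∧ force ψ w
  | .or φ ψ, w => force φ w ∨ force ψ w
  | .imp φ ψ, w => ∀ u, le w u → force φ u → force ψ u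

def truthSet (φ : Form) : Set W := {w | force φ w}

/-- The truth set of ¬p. -/
def negPSet : Set W := {w | ∀ u, le w u → u ∉ valP}

lemma key (φ : Form) : truthSet φ = ({1} : Set W) ∨ truthSet φ = Set.univ := by
  induction φ with
  | atom =>
    left; ext w; simp [truthSet, force, valP]
  | and φ ψ ihφ ihψ =>
    rcases ihφ with h1 | h1 <;> rcases ihψ with h2 | h2 <;>
      [left; left; left; right] <;>
      · ext w
        have h1' := Set.ext_iff.mp h1 w
        have h2' := Set.ext_iff.mp h2 w
        simp [truthSet, force] at h1' h2' ⊢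
        simp [h1', h2']
  | or φ ψ ihφ ihψ =>
    rcases ihφ with h1 | h1 <;> rcases ihψ with h2 | h2 <;>
      [left; right; right; right] <;>
      · ext w
        have h1' := Set.ext_iff.mp h1 w
        have h2' := Set.ext_iff.mp h2 w
        simp [truthSet, force] at h1' h2' ⊢
        simp [h1', h2']
  | imp φ ψ ihφ ihψ =>
    rcases ihφ with h1 | h1 <;> rcases ihψ with h2 | h2
    · right; ext w
      simp only [truthSet, Set.mem_setOf_eq, force, Set.mem_univ, iff_true]
      intro u _ hu
      have h1' := Set.ext_iff.mp h1 u
      have h2' := Set.ext_iff.mp h2 u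
      simp [truthSet] at h1' h2'
      exact h2'.mpr (h1'.mp hu)
    · right; ext w
      simp only [truthSet, Set.mem_setOf_eq, force, Set.mem_univ, iff_true]
      intro u _ hu
      have h2' := Set.ext_iff.mp h2 u
      simp [truthSet] at h2'
      exact h2'
    · left; ext w
      simp only [truthSet, Set.mem_setOf_eq, force, Set.mem_singleton_iff]
      constructor
      · intro h
        have hw : w ∈ truthSet Stmt9.Form.atom ∨ True := Or.inr trivial
        have hφw : force φ w := (Set.ext_iff.mp h1 w).mpr trivial
        have hψw : force ψ w := h w (Or.inl rfl) hφw
        have : w ∈ truthSet ψ := hψw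
        rw [h2] at this
        exact this
      · rintro rfl u hu _
        rcases hu with rfl | h
        · show (1 : W) ∈ truthSet ψ
          rw [h2]; rfl
        · exact absurd h (by decide)
    · right; ext w
      simp only [truthSet, Set.mem_setOf_eq, force, Set.mem_univ, iff_true]
      intro u _ _
      have h2' := Set.ext_iff.mp h2 u
      simp [truthSet] at h2'
      exact h2'

theorem neg_undefinable :
    (∀ φ : Form, truthSet φ = ({1} : Set W) ∨ truthSet φ = Set.univ) ∧
    negPSet = ({2} : Set W) ∧
    ¬ ∃ φ : Form, truthSet φ = negPSet := by
  refine ⟨key, ?_, ?_⟩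
  · ext w
    simp only [negPSet, Set.mem_setOf_eq, Set.mem_singleton_iff, valP, le]
    fin_cases w <;> simp
  · rintro ⟨φ, hφ⟩
    have hneg : negPSet = ({2} : Set W) := by
      ext w
      simp only [negPSet, Set.mem_setOf_eq, Set.mem_singleton_iff, valP, le]
      fin_cases w <;> simp
    rcases key φ with h | h <;> rw [hφ, hneg] at h
    · exact absurd (Set.ext_iff.mp h 2) (by simp)
    · exact absurd (Set.ext_iff.mp h 0) (by simp [negPSet, le, valP])

end Stmt9
end
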